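/- If L and M are bi-embeddable linear orders and L has Hausdorff rank exactly n (for n ∈ ℕ), then M has Hausdorff rank exactly n; that is, finite Hausdorff rank is a bi-embeddability invariant. -/
import Mathlib


/-- The `n`-block relation `F^n_L`: `F^0_L` is equality, and `F^{n+1}_L x y` holds iff
only finitely many `F^n_L`-equivalence classes contain a point of the closed interval
between `x` and `y`. -/
def nBlockRel {L : Type*} [LinearOrder L] : ℕ → L → L → Prop
  | 0, x, y => x = y
  | n + 1, x, y =>
      {C : Set L | (∃ w : L, C = {z | nBlockRel n w z}) ∧ (C ∩ Set.uIcc x y).Nonempty}.Finite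

/-- `L` has Hausdorff rank exactly `n`: `F^n_L` holds of every pair of elements,
and `n` is least with this property. -/
def HausdorffRankEq (L : Type*) [LinearOrder L] (n : ℕ) : Prop :=
  (∀ x y : L, nBlockRel n x y) ∧ ∀ m < n, ¬ ∀ x y : L, nBlockRel m x y

lemma nBlockRel_equivalence {L : Type*} [LinearOrder L] :
    ∀ n : ℕ, Equivalence (nBlockRel (L := L) n)
  | 0 => ⟨fun _ => rfl, fun h => h.symm, fun h h' => h.trans h'⟩
  | n + 1 => by
    have IH := nBlockRel_equivalence (L := L) n
    have classEq : ∀ a b : L, nBlockRel n a b →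
        {z | nBlockRel n a z} = {z | nBlockRel n b z} := fun a b h =>
      Set.ext fun z => ⟨fun hz => IH.trans (IH.symm h) hz, fun hz => IH.trans h hz⟩
    suffices hs : (∀ a : L, nBlockRel (n+1) a a) ∧
        (∀ a b : L, nBlockRel (n+1) a b → nBlockRel (n+1) b a) ∧
        (∀ a b c : L, nBlockRel (n+1) a b → nBlockRel (n+1) b c → nBlockRel (n+1) a c) by
      exact ⟨hs.1, fun h => hs.2.1 _ _ h, fun h1 h2 => hs.2.2 _ _ _ h1 h2⟩
    refine ⟨?_, ?_, ?_⟩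
    · intro a
      show Set.Finite _
      apply Set.Finite.subset (Set.finite_singleton {z | nBlockRel n a z})
      rintro C ⟨⟨w, rfl⟩, ⟨p, hp, hp2⟩⟩
      simp only [Set.uIcc_self, Set.mem_singleton_iff] at hp2
      subst hp2
      exact Set.mem_singleton_iff.mpr (classEq w _ hp)
    · intro a b h
      show Set.Finite _
      have h' : Set.Finite {C : Set L | (∃ w : L, C = {z | nBlockRel n w z}) ∧
          (C ∩ Set.uIcc a b).Nonempty} := h
      rw [Set.uIcc_comm a b] at h'
      exact h'
    · intro a b c h1 h2
      show Set.Finite _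
      have h1' : Set.Finite {C : Set L | (∃ w : L, C = {z | nBlockRel n w z}) ∧
          (C ∩ Set.uIcc a b).Nonempty} := h1
      have h2' : Set.Finite {C : Set L | (∃ w : L, C = {z | nBlockRel n w z}) ∧
          (C ∩ Set.uIcc b c).Nonempty} := h2
      apply Set.Finite.subset (h1'.union h2')
      rintro C ⟨hw, ⟨p, hp, hp2⟩⟩
      rcases Set.uIcc_subset_uIcc_union_uIcc (b := b) hp2 with h | h
      · exact Or.inl ⟨hw, ⟨p, hp, h⟩⟩
      · exact Or.inr ⟨hw, ⟨p, hp, h⟩⟩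

lemma nBlockRel_of_orderEmbedding {L M : Type*} [LinearOrder L] [LinearOrder M]
    (f : M ↪o L) : ∀ n : ℕ, ∀ x y : M, nBlockRel n (f x) (f y) → nBlockRel n x y
  | 0, x, y, h => f.injective h
  | n + 1, x, y, h => by
    have IHL := nBlockRel_equivalence (L := L) n
    have IHM := nBlockRel_equivalence (L := M) n
    have classEqM : ∀ a b : M, nBlockRel n a b →
        {z | nBlockRel n a z} = {z | nBlockRel n b z} := fun a b h' =>
      Set.ext fun z => ⟨fun hz => IHM.trans (IHM.symm h') hz, fun hz => IHM.trans h' hz⟩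
    have himg : ∀ p : M, p ∈ Set.uIcc x y → f p ∈ Set.uIcc (f x) (f y) := by
      intro p hp
      rcases Set.mem_uIcc.mp hp with ⟨h1, h2⟩ | ⟨h1, h2⟩
      · exact Set.mem_uIcc.mpr (Or.inl ⟨f.monotone h1, f.monotone h2⟩)
      · exact Set.mem_uIcc.mpr (Or.inr ⟨f.monotone h1, f.monotone h2⟩)
    have hL : Set.Finite {C : Set L | (∃ w : L, C = {z | nBlockRel n w z}) ∧
        (C ∩ Set.uIcc (f x) (f y)).Nonempty} := h
    show Set.Finite {C : Set M | (∃ w : M, C = {z | nBlockRel n w z}) ∧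
        (C ∩ Set.uIcc x y).Nonempty}
    rw [← Set.finite_coe_iff] at hL ⊢
    refine Finite.of_injective (fun C =>
      (⟨{z | nBlockRel n (f C.2.2.choose) z}, ⟨_, rfl⟩,
        ⟨f C.2.2.choose, IHL.refl _, himg _ C.2.2.choose_spec.2⟩⟩ :
        {C : Set L | (∃ w : L, C = {z | nBlockRel n w z}) ∧
          (C ∩ Set.uIcc (f x) (f y)).Nonempty})) ?_
    rintro ⟨C, hC⟩ ⟨C', hC'⟩ heq
    simp only [Subtype.mk.injEq] at heq
    set p := hC.2.choose with hpdef
    set p' := hC'.2.choose with hp'def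
    have hfp : nBlockRel n (f p) (f p') := by
      have : f p' ∈ {z | nBlockRel n (f p) z} := by
        rw [heq]; exact IHL.refl _
      exact this
    have hpp' : nBlockRel n p p' := nBlockRel_of_orderEmbedding f n p p' hfp
    obtain ⟨w, hw⟩ := hC.1
    obtain ⟨w', hw'⟩ := hC'.1
    have hwp : nBlockRel n w p := hw.subset hC.2.choose_spec.1
    have hwp' : nBlockRel n w' p' := hw'.subset hC'.2.choose_spec.1
    refine Subtype.ext ?_
    show C = C'
    rw [hw, hw', classEqM w p hwp, classEqM w' p' hwp', classEqM p p' hpp']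

/-- If `L` and `M` are bi-embeddable linear orders and `L` has Hausdorff rank exactly `n`,
then `M` has Hausdorff rank exactly `n`: finite Hausdorff rank is a bi-embeddability
invariant. -/
theorem hausdorffRank_biEmbeddable_invariant {L M : Type*} [LinearOrder L] [LinearOrder M]
    (n : ℕ) (hLM : Nonempty (L ↪o M)) (hML : Nonempty (M ↪o L))
    (hL : HausdorffRankEq L n) : HausdorffRankEq M n := by
  obtain ⟨f⟩ := hLM
  obtain ⟨g⟩ := hML
  obtain ⟨h1, h2⟩ := hL
  refine ⟨fun x y => nBlockRel_of_orderEmbedding g n x y (h1 (g x) (g y)), fun m hm hall => ?_⟩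
  exact h2 m hm fun x y => nBlockRel_of_orderEmbedding f m x y (hall (f x) (f y))
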